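/- arXiv:2301.03285 — 5 statements merged into one kernel-verified Lean document; each statement's English description precedes it below -/
import Mathlib

section
/- Let α be regainingly approximable via a computable nondecreasing rational sequence (a_n) converging to α with A = {n : α − a_n < 2^{−n}} infinite. Then the following are equivalent: (a) α is computable; (b) A is decidable; (c) A is not hyperimmune. -/
open Filter

noncomputable section

/-- A real is *regainingly approximable* if some computable nondecreasing rational
sequence converging to it is within `2⁻ⁿ` of it for infinitely many `n`. -/
def RegainApprox (α : ℝ) : Prop :=
  ∃ a : ℕ → ℚ, Computable a ∧ Monotone a ∧
    Tendsto (fun n => (a n : ℝ)) atTop (nhds α) ∧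
    ∃ᶠ n in atTop, α - (a n : ℝ) < (2 : ℝ)⁻¹ ^ n

def LeftComputable (α : ℝ) : Prop :=
  ∃ a : ℕ → ℚ, Computable a ∧ Monotone a ∧
    Tendsto (fun n => (a n : ℝ)) atTop (nhds α)

def ComputableReal (α : ℝ) : Prop :=
  ∃ a : ℕ → ℚ, Computable a ∧ ∀ n, |α - (a n : ℝ)| < (2 : ℝ)⁻¹ ^ n

/-- The real number `2^{-A}`. -/
def realOfSet (A : Set ℕ) : ℝ := ∑' a : A, (2 : ℝ)⁻¹ ^ ((a : ℕ) + 1)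

/-- A set is regainingly approximable if it is c.e. and `2^{-A}` is regainingly approximable. -/
def RegainApproxSet (A : Set ℕ) : Prop :=
  REPred (· ∈ A) ∧ RegainApprox (realOfSet A)

/-! (a) ⇒ (b): given a computable approximation `b` of `α`, decide `α < a n + 2⁻ⁿ` by searching
for an `m` at which `b m ± 2⁻ᵐ` separates the two numbers; such an `m` exists unless
`α = a n + 2⁻ⁿ`, which can only happen for rational `α`, where the comparison is direct.
(b) ⇒ (c): the principal function of a decidable infinite set is computable.
(c) ⇒ (a): since `a` is nondecreasing, `a (r n)` is at least as close to `α` as `a (p_A n)`,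
which is within `2^{-p_A n} ≤ 2⁻ⁿ`.
-/

open Encodable Denumerable

theorem Int.encode_eq_ite (z : ℤ) :
    encode z = if 0 ≤ z then 2 * z.toNat else 2 * (-z).toNat - 1 := by
  cases z with
  | ofNat n => exact (if_pos (Int.natCast_nonneg n)).symm
  | negSucc n =>
    show 2 * n + 1 = _
    rw [if_neg (Int.negSucc_lt_zero n).not_ge]
    omega

namespace Primrec

theorem int_toNat : Primrec Int.toNat :=
  (ite (Primrec.eq.comp (nat_mod.comp .encode (const 2)) (const 0))
    (nat_div.comp .encode (const 2)) (const 0)).of_eq fun z => by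
    rw [Int.encode_eq_ite]; split_ifs <;> omega

theorem int_toNat_neg : Primrec fun z : ℤ => (-z).toNat :=
  (ite (Primrec.eq.comp (nat_mod.comp .encode (const 2)) (const 0))
    (const 0) (succ.comp (nat_div.comp .encode (const 2)))).of_eq fun z => by
    rw [Int.encode_eq_ite]; split_ifs <;> omega

theorem int_natCast_sub : Primrec₂ fun m n : ℕ => (m - n : ℤ) :=
  Primrec₂.encode_iff.mp <| (ite (nat_le.comp snd fst) (nat_double.comp (nat_sub.comp fst snd))
    (nat_sub.comp (nat_double.comp (nat_sub.comp snd fst)) (const 1))).of_eq fun p => by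
    simp only [Int.encode_eq_ite]; split_ifs <;> omega

theorem int_natCast : Primrec (Nat.cast : ℕ → ℤ) :=
  (int_natCast_sub.comp .id (const 0)).of_eq fun _ => sub_zero _

theorem int_natAbs : Primrec Int.natAbs :=
  (nat_add.comp int_toNat int_toNat_neg).of_eq fun z => by omega

theorem int_add : Primrec₂ ((· + ·) : ℤ → ℤ → ℤ) :=
  (int_natCast_sub.comp (nat_add.comp (int_toNat.comp fst) (int_toNat.comp snd))
    (nat_add.comp (int_toNat_neg.comp fst) (int_toNat_neg.comp snd))).of_eq fun p => by
    push_cast; omega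

theorem int_mul : Primrec₂ ((· * ·) : ℤ → ℤ → ℤ) := by
  have hz := int_toNat.comp (fst (α := ℤ) (β := ℤ))
  have hz' := int_toNat_neg.comp (fst (α := ℤ) (β := ℤ))
  have hw := int_toNat.comp (snd (α := ℤ) (β := ℤ))
  have hw' := int_toNat_neg.comp (snd (α := ℤ) (β := ℤ))
  refine (int_natCast_sub.comp (nat_add.comp (nat_mul.comp hz hw) (nat_mul.comp hz' hw'))
    (nat_add.comp (nat_mul.comp hz hw') (nat_mul.comp hz' hw))).of_eq fun p => ?_
  push_cast
  conv_rhs => rw [← Int.toNat_sub_toNat_neg p.1, ← Int.toNat_sub_toNat_neg p.2]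
  ring

theorem int_le : PrimrecRel ((· ≤ ·) : ℤ → ℤ → Prop) :=
  (nat_le.comp (nat_add.comp (int_toNat.comp fst) (int_toNat_neg.comp snd))
    (nat_add.comp (int_toNat.comp snd) (int_toNat_neg.comp fst))).of_eq fun p => by omega

theorem nat_pow : Primrec₂ ((· ^ ·) : ℕ → ℕ → ℕ) :=
  (nat_rec' snd (const 1) (nat_mul.comp (snd.comp snd) (fst.comp fst)).to₂).of_eq fun p => by
    induction p.2 with
    | zero => rfl
    | succ n ih => simp [ih, pow_succ]

theorem nat_coprime : PrimrecRel Nat.Coprime := by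
  have hdvd : PrimrecRel ((· ∣ ·) : ℕ → ℕ → Prop) :=
    (Primrec.eq.comp (nat_mod.comp snd fst) (const 0)).of_eq
      fun _ => Nat.dvd_iff_mod_eq_zero.symm
  have hR : PrimrecRel fun (k : ℕ) (p : ℕ × ℕ) => ¬((k ∣ p.1 ∧ k ∣ p.2) ∧ ¬k = 1) :=
    (((hdvd.comp fst (fst.comp snd)).and (hdvd.comp fst (snd.comp snd))).and
      (Primrec.eq.comp fst (const 1)).not).not
  refine ((PrimrecRel.forall_mem_list hR).comp
    (list_range.comp (succ.comp (nat_add.comp fst snd))) Primrec.id).of_eq fun p => ?_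
  simp only [List.mem_range, id]
  refine ⟨fun h => ?_,
    fun h k _ ⟨⟨hk₁, hk₂⟩, hk⟩ => hk (Nat.eq_one_of_dvd_coprimes h hk₁ hk₂)⟩
  have hgcd : p.1.gcd p.2 < p.1 + p.2 + 1 := by
    rcases Nat.eq_zero_or_pos p.1 with h0 | h0
    · simp [h0]
    · have := Nat.gcd_le_left p.2 h0; omega
  by_contra hne
  exact h _ hgcd ⟨⟨Nat.gcd_dvd_left _ _, Nat.gcd_dvd_right _ _⟩, hne⟩

end Primrec

theorem ComputablePred.computable_count {p : ℕ → Prop} [DecidablePred p]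
    (hp : ComputablePred p) : Computable (Nat.count p) := by
  refine (Computable.nat_rec (h := fun _ q => q.2 + cond (decide (p q.1)) 1 0) .id (.const 0)
    (Primrec.nat_add.to_comp.comp (Computable.snd.comp .snd)
      (Computable.cond (hp.decide.comp (Computable.fst.comp .snd)) (.const 1) (.const 0)))).of_eq
    fun n => ?_
  induction n with
  | zero => rfl
  | succ n ih =>
    rw [Nat.count_succ, ← ih]
    by_cases h : p n <;> simp [h]

theorem ComputablePred.computable_nth {p : ℕ → Prop} (hp : ComputablePred p)
    (hinf : {n | p n}.Infinite) : Computable (Nat.nth p) := by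
  classical
  have hP : ComputablePred fun q : ℕ × ℕ => p q.2 ∧ Nat.count p q.2 = q.1 :=
    Computable.computablePred <| (Primrec.and.to_comp.comp (hp.decide.comp .snd)
      (Primrec.eq.decide.to_comp.comp (hp.computable_count.comp .snd) .fst)).of_eq
      fun q => (Bool.decide_and _ _).symm
  have hex (n : ℕ) : ∃ k, p k ∧ Nat.count p k = n :=
    ⟨_, Nat.nth_mem_of_infinite hinf n, Nat.count_nth_of_infinite hinf n⟩
  refine (Computable.find hP hex).of_eq fun n => ?_
  obtain ⟨hmem, hcount⟩ := Nat.find_spec (hex n)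
  rw [← hcount, Nat.nth_count hmem, hcount]

namespace Rat

/-- The code of `q` under `Rat.instEncodable`. The `Primcodable ℚ` instance comes from
`Denumerable.ofEncodableOfInfinite`, i.e. it numbers these codes in increasing order. -/
def numDenCode (q : ℚ) : ℕ := Nat.pair (encode q.num) q.den

theorem numDenCode_eq_encode : numDenCode = @encode ℚ Rat.instEncodable := rfl

theorem mem_range_numDenCode_iff (x : ℕ) : x ∈ Set.range numDenCode ↔
    x.unpair.2 ≠ 0 ∧ (ofNat ℤ x.unpair.1).natAbs.Coprime x.unpair.2 := by
  constructor
  · rintro ⟨q, rfl⟩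
    simpa only [numDenCode, Nat.unpair_pair, ofNat_encode, ne_eq] using ⟨q.den_nz, q.reduced⟩
  · rintro ⟨hden, hcop⟩
    refine ⟨Rat.mk' _ _ hden hcop, ?_⟩
    simp only [numDenCode, encode_ofNat, Nat.pair_unpair]

theorem infinite_range_numDenCode : (Set.range numDenCode).Infinite := by
  rw [numDenCode_eq_encode]
  exact Set.infinite_range_of_injective encode_injective

theorem numDenCode_ofNat (n : ℕ) :
    numDenCode (ofNat ℚ n) = Nat.nth (· ∈ Set.range numDenCode) n := by
  -- the instances chosen by `Denumerable.ofEncodableOfInfinite`, so the last step is `rfl`-level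
  let _ : DecidablePred (· ∈ {x | x ∈ Set.range numDenCode}) :=
    @decidableRangeEncode ℚ Rat.instEncodable
  have : Infinite {x | x ∈ Set.range numDenCode} := infinite_range_numDenCode.to_subtype
  rw [Nat.nth_apply_eq_orderIsoOfNat (p := (· ∈ Set.range numDenCode)) infinite_range_numDenCode,
    Nat.Subtype.orderIsoOfNat_apply]
  exact congrArg Subtype.val ((equivRangeEncode ℚ).apply_symm_apply _)

theorem computable_numDenCode : Computable numDenCode := by
  have hS : ComputablePred (· ∈ Set.range numDenCode) :=
    (PrimrecPred.and (Primrec.eq.comp (Primrec.snd.comp .unpair) (.const 0)).not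
      (Primrec.nat_coprime.comp
        (Primrec.int_natAbs.comp ((Primrec.ofNat ℤ).comp (Primrec.fst.comp .unpair)))
        (Primrec.snd.comp .unpair))).computablePred.of_eq
      fun x => (mem_range_numDenCode_iff x).symm
  refine ((hS.computable_nth infinite_range_numDenCode).comp Computable.encode).of_eq fun q => ?_
  rw [← numDenCode_ofNat, ofNat_encode]

theorem computable_num : Computable Rat.num :=
  ((Computable.ofNat ℤ).comp (Computable.fst.comp (Primrec.unpair.to_comp.comp
    computable_numDenCode))).of_eq fun q => by simp only [numDenCode, Nat.unpair_pair, ofNat_encode]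

theorem computable_den : Computable Rat.den :=
  (Computable.snd.comp (Primrec.unpair.to_comp.comp computable_numDenCode)).of_eq fun q => by
    simp only [numDenCode, Nat.unpair_pair]

theorem computable_num_mul_den : Computable₂ fun q r : ℚ => q.num * (r.den : ℤ) :=
  Primrec.int_mul.to_comp.comp (computable_num.comp .fst)
    (Primrec.int_natCast.to_comp.comp (computable_den.comp .snd))

theorem computable_decide_le : Computable₂ fun q r : ℚ => decide (q ≤ r) :=
  (Primrec.int_le.decide.to_comp.comp computable_num_mul_den
    (computable_num_mul_den.comp .snd .fst)).of_eq fun p => by simp only [Rat.le_iff]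

theorem eq_mkRat_iff {d : ℕ} (hd : d ≠ 0) (q : ℚ) (z : ℤ) :
    q = mkRat z d ↔ q.num * d = z * q.den := by
  conv_lhs => rw [← Rat.num_div_den q, Rat.mkRat_eq_div]
  rw [div_eq_div_iff (by exact_mod_cast q.den_nz) (by exact_mod_cast hd)]
  exact_mod_cast Iff.rfl

theorem computable_mkRat : Computable₂ mkRat := by
  let P (p : ℤ × ℕ) (k : ℕ) : Prop :=
    p.2 = 0 ∨ (ofNat ℚ k).num * p.2 = p.1 * (ofNat ℚ k).den
  have hP : ComputablePred fun p : (ℤ × ℕ) × ℕ => P p.1 p.2 := by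
    have hq := Computable.ofNat ℚ |>.comp (Computable.snd (α := ℤ × ℕ) (β := ℕ))
    refine Computable.computablePred <| (Primrec.or.to_comp.comp
      (Primrec.eq.decide.to_comp.comp (Computable.snd.comp .fst) (.const 0))
      (Primrec.eq.decide.to_comp.comp
        (Primrec.int_mul.to_comp.comp (computable_num.comp hq)
          (Primrec.int_natCast.to_comp.comp (Computable.snd.comp .fst)))
        (Primrec.int_mul.to_comp.comp (Computable.fst.comp (Computable.fst))
          (Primrec.int_natCast.to_comp.comp (computable_den.comp hq))))).of_eq
      fun p => (Bool.decide_or _ _).symm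
  have hex (p : ℤ × ℕ) : ∃ k, P p k := by
    obtain ⟨k, hk⟩ : ∃ k, ofNat ℚ k = mkRat p.1 p.2 := ⟨_, ofNat_encode _⟩
    refine ⟨k, or_iff_not_imp_left.mpr fun hd => (eq_mkRat_iff hd _ _).mp hk⟩
  refine (Computable.cond (Primrec.eq.decide.to_comp.comp .snd (.const 0)) (.const 0)
    ((Computable.ofNat ℚ).comp (Computable.find hP hex))).of_eq fun p => ?_
  by_cases hd : p.2 = 0
  · rw [decide_eq_true hd, cond_true, hd, Rat.mkRat_zero]
  · rw [decide_eq_false hd, cond_false]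
    exact (eq_mkRat_iff hd _ _).mpr ((Nat.find_spec (hex p)).resolve_left hd)

theorem computable_add : Computable₂ ((· + ·) : ℚ → ℚ → ℚ) :=
  (computable_mkRat.comp (Primrec.int_add.to_comp.comp computable_num_mul_den
    (computable_num_mul_den.comp .snd .fst))
    (Primrec.nat_mul.to_comp.comp (computable_den.comp .fst) (computable_den.comp .snd))).of_eq
    fun p => (Rat.add_def' p.1 p.2).symm

theorem computable_two_inv_pow : Computable fun n : ℕ => (2⁻¹ : ℚ) ^ n :=
  (computable_mkRat.comp (.const 1) (Primrec.nat_pow.to_comp.comp (.const 2) .id)).of_eq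
    fun n => by rw [Rat.mkRat_eq_div]; push_cast; rw [id, inv_pow, one_div]

end Rat

theorem exists_add_le_or_add_le {α c : ℝ} (hne : α ≠ c) {b : ℕ → ℝ}
    (hb : ∀ m, |α - b m| < 2⁻¹ ^ m) : ∃ m, b m + 2⁻¹ ^ m ≤ c ∨ c + 2⁻¹ ^ m ≤ b m := by
  obtain ⟨m, hm⟩ := exists_pow_lt_of_lt_one (by positivity : 0 < |α - c| / 2)
    (by norm_num : (2 : ℝ)⁻¹ < 1)
  refine ⟨m, ?_⟩
  have := abs_lt.mp (hb m)
  rcases hne.lt_or_gt with h | h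
  · rw [abs_of_neg (sub_neg.mpr h)] at hm
    exact .inl (by linarith)
  · rw [abs_of_pos (sub_pos.mpr h)] at hm
    exact .inr (by linarith)

theorem ComputableReal.computablePred_lt {γ : Type*} [Primcodable γ] {α : ℝ}
    (hα : ComputableReal α) {c : γ → ℚ} (hc : Computable c) :
    ComputablePred fun s => α < c s := by
  obtain ⟨b, hb, hbα⟩ := hα
  by_cases hrat : ∃ q : ℚ, α = q
  · obtain ⟨q, rfl⟩ := hrat
    refine (Computable.computablePred (p := fun s => ¬c s ≤ q) ((Primrec.not.to_comp.comp
      (Rat.computable_decide_le.comp hc (.const q))).of_eq fun s => decide_not.symm)).of_eq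
      fun s => by rw [not_le, Rat.cast_lt]
  push Not at hrat
  let e (m : ℕ) : ℚ := 2⁻¹ ^ m
  let P (s : γ) (m : ℕ) : Prop := b m + e m ≤ c s ∨ c s + e m ≤ b m
  have hP : ComputablePred fun p : γ × ℕ => P p.1 p.2 := by
    refine Computable.computablePred <| (Primrec.or.to_comp.comp
      (Rat.computable_decide_le.comp (Rat.computable_add.comp (hb.comp .snd)
        (Rat.computable_two_inv_pow.comp .snd)) (hc.comp .fst))
      (Rat.computable_decide_le.comp (Rat.computable_add.comp (hc.comp .fst)
        (Rat.computable_two_inv_pow.comp .snd)) (hb.comp .snd))).of_eq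
      fun p => (Bool.decide_or _ _).symm
  have hex (s : γ) : ∃ m, P s m := by
    obtain ⟨m, hm⟩ := exists_add_le_or_add_le (hrat (c s)) hbα
    refine ⟨m, ?_⟩
    simp only [P, e, ← Rat.cast_le (K := ℝ)]
    push_cast
    exact hm
  have hcorrect (s : γ) (m : ℕ) (hm : P s m) : b m + e m ≤ c s ↔ α < c s := by
    obtain ⟨hlo, hhi⟩ := abs_lt.mp (hbα m)
    simp only [P, e, ← Rat.cast_le (K := ℝ)] at hm ⊢
    push_cast at hm ⊢
    exact ⟨fun h => by linarith, fun h => hm.resolve_right fun h' => by linarith⟩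
  have hfind := Computable.find hP hex
  exact (Rat.computable_decide_le.comp (Rat.computable_add.comp (hb.comp hfind)
    (Rat.computable_two_inv_pow.comp hfind)) hc).computablePred.of_eq
    fun s => hcorrect s _ (Nat.find_spec (hex s))

theorem abs_sub_lt_of_nth_le {f : ℕ → ℝ} {α : ℝ} (hmono : Monotone f) (hle : ∀ n, f n ≤ α)
    (hinf : {m | α - f m < 2⁻¹ ^ m}.Infinite) {n N : ℕ}
    (hN : Nat.nth (fun m => α - f m < 2⁻¹ ^ m) n ≤ N) : |α - f N| < 2⁻¹ ^ n := by
  have hnth := Nat.nth_mem_of_infinite hinf n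
  have hn : n ≤ Nat.nth (fun m => α - f m < 2⁻¹ ^ m) n := Nat.le_nth fun hf => absurd hf hinf
  rw [abs_of_nonneg (sub_nonneg.mpr (hle N))]
  calc α - f N ≤ α - f (Nat.nth (fun m => α - f m < 2⁻¹ ^ m) n) := by linarith [hmono hN]
    _ < 2⁻¹ ^ Nat.nth (fun m => α - f m < 2⁻¹ ^ m) n := hnth
    _ ≤ 2⁻¹ ^ n := pow_le_pow_of_le_one (by norm_num) (by norm_num) hn

/-- For the set `A` of catch-up points of a regaining approximation:
`α` computable ↔ `A` decidable ↔ `A` not hyperimmune. -/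
theorem stmt_5 (α : ℝ) (a : ℕ → ℚ) (ha : Computable a) (hmono : Monotone a)
    (hlim : Tendsto (fun n => (a n : ℝ)) atTop (nhds α))
    (hio : ∃ᶠ n in atTop, α - (a n : ℝ) < (2 : ℝ)⁻¹ ^ n) :
    List.TFAE
      [ ComputableReal α,
        ComputablePred (fun n => α - (a n : ℝ) < (2 : ℝ)⁻¹ ^ n),
        ∃ r : ℕ → ℕ, Computable r ∧
          ∀ n, Nat.nth (fun m => α - (a m : ℝ) < (2 : ℝ)⁻¹ ^ m) n ≤ r n ] := by
  have hmono' : Monotone fun n => (a n : ℝ) := fun _ _ h => Rat.cast_le.mpr (hmono h)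
  have hinf := Nat.frequently_atTop_iff_infinite.mp hio
  tfae_have 1 → 2 := fun hα =>
    (hα.computablePred_lt (Rat.computable_add.comp ha Rat.computable_two_inv_pow)).of_eq
      fun n => by push_cast; exact sub_lt_iff_lt_add'.symm
  tfae_have 2 → 3 := fun hA => ⟨_, hA.computable_nth hinf, fun _ => le_rfl⟩
  tfae_have 3 → 1 := fun ⟨r, hr, hrA⟩ => ⟨fun n => a (r n), ha.comp hr,
    fun n => abs_sub_lt_of_nth_le hmono' (hmono'.ge_of_tendsto hlim) hinf (hrA n)⟩
  tfae_finish
end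
end

section
/- For a computably enumerable set A ⊆ ℕ: if 2^{−A} is regainingly approximable, then every computable enumeration f of A is r-good for some computable increasing function r : ℕ → ℕ. -/
open Filter

noncomputable section

/-- `f` is an enumeration of `A`: `f k = n+1` means `n` is enumerated at stage `k`. -/
def IsEnum (f : ℕ → ℕ) (A : Set ℕ) : Prop := ∀ n, n ∈ A ↔ ∃ k, f k = n + 1

/-- The elements enumerated by `f` before stage `t`. -/
def EnumBy (f : ℕ → ℕ) (t : ℕ) : Set ℕ := {n | ∃ k < t, f k = n + 1}

/-- An enumeration `f` of `A` is `r`-good if for infinitely many `n`, all elements of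
`A` below `n` are enumerated before stage `r n`. -/
def RGood (r : ℕ → ℕ) (f : ℕ → ℕ) (A : Set ℕ) : Prop :=
  ∃ᶠ n in Filter.atTop, ∀ m < n, m ∈ A → m ∈ EnumBy f (r n)

/-!
Let `a` be a computable nondecreasing approximation of `α = 2^{-A}` with `α - a n < 2⁻ⁿ` for
infinitely many `n`. Let `T n` be the first stage `t` at which the elements of `A` below `n`
that `f` has enumerated before `t` already make up `a n` up to `2⁻ⁿ`. This is decidable and it
gets harder as `n` grows, so `T` is computable and monotone. Suppose `α - a n < 2⁻ⁿ` and some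
`m ∈ A` with `m + 1 < n` is still missing at stage `T n`. Then its weight `2^{-(m+1)} ≥ 2^{1-n}`
fits into the gap `α - (a n - 2⁻ⁿ) < 2^{1-n}`, which is impossible. So `r n = T (n + 1) + n`
satisfies the goodness condition at `n` whenever `n + 1` is one of the good indices.
-/

theorem ComputablePred.exists_lt_nat {α : Type*} [Primcodable α] {p : α → ℕ → Prop}
    (hp : ComputablePred fun x : α × ℕ => p x.1 x.2) :
    ComputablePred fun x : α × ℕ => ∃ k < x.2, p x.1 k := by
  classical
  have hstep : Computable₂ fun (x : α × ℕ) (kb : ℕ × Bool) => kb.2 || decide (p x.1 kb.1) :=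
    Primrec.or.to_comp.comp (Computable.snd.comp Computable.snd)
      (hp.decide.comp ((Computable.fst.comp Computable.fst).pair
        (Computable.fst.comp Computable.snd)))
  have hrec : Computable fun x : α × ℕ =>
      Nat.rec (motive := fun _ => Bool) false (fun k b => b || decide (p x.1 k)) x.2 :=
    Computable.nat_rec Computable.snd (Computable.const false) hstep
  refine Computable.computablePred (hrec.of_eq fun x => ?_)
  induction x.2 with
  | zero => simp
  | succ t ih =>
    have : (∃ k < t + 1, p x.1 k) ↔ (∃ k < t, p x.1 k) ∨ p x.1 t := by
      simp [Nat.le_iff_lt_or_eq, or_and_right, exists_or]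
    simp only [decide_eq_decide.2 this, Bool.decide_or, ← ih]

theorem Primrec.nat_gcd : Primrec₂ Nat.gcd := by
  have hdvd : PrimrecRel fun d a : ℕ => d ∣ a :=
    (Primrec.eq.comp (Primrec.nat_mod.comp Primrec.snd Primrec.fst) (Primrec.const 0)).of_eq
      fun _ => Nat.dvd_iff_mod_eq_zero.symm
  have hcommon : PrimrecRel fun (p : ℕ × ℕ) d => d ∣ p.1 ∧ d ∣ p.2 :=
    (hdvd.comp Primrec.snd (Primrec.fst.comp Primrec.fst)).and
      (hdvd.comp Primrec.snd (Primrec.snd.comp Primrec.fst))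
  refine (Primrec.nat_findGreatest (Primrec.nat_add.comp Primrec.fst Primrec.snd)
    hcommon).of_eq fun ⟨a, b⟩ => ?_
  refine Nat.findGreatest_eq_iff.2 ⟨?_, fun _ => ⟨Nat.gcd_dvd_left a b, Nat.gcd_dvd_right a b⟩,
    fun k hk _ ⟨hka, hkb⟩ => ?_⟩
  · rcases Nat.eq_zero_or_pos a with rfl | ha
    · simp
    · exact (Nat.gcd_le_left b ha).trans (Nat.le_add_right a b)
  · rcases Nat.eq_zero_or_pos (Nat.gcd a b) with h0 | h0
    · obtain ⟨rfl, rfl⟩ := Nat.gcd_eq_zero_iff.1 h0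
      omega
    · exact absurd (Nat.le_of_dvd h0 (Nat.dvd_gcd hka hkb)) (not_le.2 hk)

theorem Computable.nat_subtype_ofNat {s : Set ℕ} [DecidablePred (· ∈ s)] [Infinite s]
    (hs : ComputablePred (· ∈ s)) : Computable fun n => (Nat.Subtype.ofNat s n : ℕ) := by
  have hnext : ∀ x : ℕ, ∃ m, x + m + 1 ∈ s := fun x => by
    obtain ⟨b, hb, hxb⟩ := (Set.infinite_coe_iff.1 ‹Infinite s›).exists_gt x
    exact ⟨b - x - 1, by rwa [show x + (b - x - 1) + 1 = b by omega]⟩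
  have hfind : Computable fun x => Nat.find (hnext x) :=
    Computable.find (P := fun x m => x + m + 1 ∈ s) (Computable.computablePred
      (hs.decide.comp (Primrec.succ.to_comp.comp (Primrec.nat_add.to_comp.comp
        Computable.fst Computable.snd)))) hnext
  have hrec : Computable fun n : ℕ => Nat.rec (motive := fun _ => ℕ) (Nat.Subtype.ofNat s 0 : ℕ)
      (fun _ x => x + Nat.find (hnext x) + 1) n :=
    Computable.nat_rec Computable.id (Computable.const _)
      (Primrec.succ.to_comp.comp (Primrec.nat_add.to_comp.comp
        (Computable.snd.comp Computable.snd)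
        (hfind.comp (Computable.snd.comp Computable.snd)))).to₂
  refine hrec.of_eq fun n => ?_
  induction n with
  | zero => rfl
  | succ n ih => simp only [Nat.Subtype.ofNat, Nat.Subtype.succ, ← ih]

theorem Equiv.natAbs_intEquivNat_symm (k : ℕ) :
    (Equiv.intEquivNat.symm k).natAbs = (k + 1) / 2 := by
  obtain ⟨z, rfl⟩ := Equiv.intEquivNat.surjective k
  rw [Equiv.symm_apply_apply]
  cases z with
  | ofNat j => show j = (2 * j + 1) / 2; omega
  | negSucc j => show j + 1 = (2 * j + 1 + 1) / 2; omega

theorem Equiv.toNat_intEquivNat_symm (k : ℕ) :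
    (Equiv.intEquivNat.symm k).toNat = if k % 2 = 0 then k / 2 else 0 := by
  obtain ⟨z, rfl⟩ := Equiv.intEquivNat.surjective k
  rw [Equiv.symm_apply_apply]
  cases z with
  | ofNat j => show j = if 2 * j % 2 = 0 then 2 * j / 2 else 0; simp
  | negSucc j => show 0 = if (2 * j + 1) % 2 = 0 then (2 * j + 1) / 2 else 0; simp

/- The `Primcodable ℚ` instance comes from `Denumerable ℚ`, which renumbers the codes of this
(numerator, denominator) encoding in increasing order. Undoing that renumbering is what makes
numerator and denominator computable. -/
local notation "ratCode" => @Encodable.encode ℚ Rat.instEncodable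

namespace Rat

theorem encode_eq_pair (q : ℚ) : ratCode q = Nat.pair (Equiv.intEquivNat q.num) q.den := rfl

theorem mem_range_encode_iff {n : ℕ} : n ∈ Set.range ratCode ↔
    0 < n.unpair.2 ∧ (Equiv.intEquivNat.symm n.unpair.1).natAbs.Coprime n.unpair.2 := by
  constructor
  · rintro ⟨q, rfl⟩
    simpa [encode_eq_pair] using ⟨q.pos, q.reduced⟩
  · rintro ⟨hd, hcop⟩
    exact ⟨⟨_, _, hd.ne', hcop⟩, by simp [encode_eq_pair]⟩

theorem computablePred_mem_range_encode : ComputablePred (· ∈ Set.range ratCode) := by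
  have hu1 : Primrec fun n : ℕ => n.unpair.1 := Primrec.fst.comp Primrec.unpair
  have hu2 : Primrec fun n : ℕ => n.unpair.2 := Primrec.snd.comp Primrec.unpair
  refine PrimrecPred.computablePred (((Primrec.nat_lt.comp (Primrec.const 0) hu2).and
    (Primrec.eq.comp (Primrec.nat_gcd.comp (Primrec.nat_div.comp (Primrec.succ.comp hu1)
      (Primrec.const 2)) hu2) (Primrec.const 1))).of_eq fun n => ?_)
  rw [mem_range_encode_iff, Equiv.natAbs_intEquivNat_symm, Nat.coprime_iff_gcd_eq_one]

open Encodable in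
theorem computable_encode : Computable ratCode := by
  let := decidableRangeEncode ℚ
  have : Infinite (Set.range ratCode) :=
    Infinite.of_injective _ (Equiv.ofInjective _ encode_injective).injective
  refine ((Computable.nat_subtype_ofNat computablePred_mem_range_encode).comp
    Computable.encode).of_eq fun q => ?_
  conv_rhs => rw [← Denumerable.ofNat_encode q]
  rw [Rat.instDenumerable, Denumerable.ofEncodableOfInfinite]
  simp only [Denumerable.ofEquiv_ofNat, Equiv.coe_fn_symm_mk, Denumerable.ofNat_nat]
  exact (congrArg Subtype.val ((equivRangeEncode ℚ).apply_symm_apply _)).symm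

theorem computable_den_s9 : Computable fun q : ℚ => q.den :=
  ((Primrec.snd.comp Primrec.unpair).to_comp.comp computable_encode).of_eq fun q => by
    simp [encode_eq_pair]

theorem computable_num_toNat : Computable fun q : ℚ => q.num.toNat := by
  have hk : Primrec fun k : ℕ => if k % 2 = 0 then k / 2 else 0 :=
    Primrec.ite (Primrec.eq.comp (Primrec.nat_mod.comp Primrec.id (Primrec.const 2))
      (Primrec.const 0)) (Primrec.nat_div.comp Primrec.id (Primrec.const 2)) (Primrec.const 0)
  refine ((hk.comp (Primrec.fst.comp Primrec.unpair)).to_comp.comp computable_encode).of_eq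
    fun q => ?_
  rw [encode_eq_pair, Nat.unpair_pair, ← Equiv.toNat_intEquivNat_symm, Equiv.symm_apply_apply]

/-- Truncating a negative numerator to `0` is harmless since `N / D ≥ 0`. -/
theorem le_natCast_div_iff {q : ℚ} {N D : ℕ} (hD : 0 < D) :
    q ≤ N / D ↔ q.num.toNat * D ≤ N * q.den := by
  rw [le_div_iff₀ (by exact_mod_cast hD)]
  conv_lhs => rw [← Rat.num_div_den q, div_mul_eq_mul_div, div_le_iff₀ (by exact_mod_cast q.pos)]
  rcases le_or_gt 0 q.num with h | h
  · rw [← Int.toNat_of_nonneg h]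
    exact_mod_cast Iff.rfl
  · rw [Int.toNat_of_nonpos h.le, zero_mul]
    simp only [zero_le, iff_true]
    exact (mul_nonpos_of_nonpos_of_nonneg (by exact_mod_cast h.le) (Nat.cast_nonneg D)).trans
      (by positivity)

end Rat

instance (f : ℕ → ℕ) (t : ℕ) : DecidablePred (· ∈ EnumBy f t) :=
  fun n => inferInstanceAs (Decidable (∃ k < t, f k = n + 1))

theorem enumBy_mono (f : ℕ → ℕ) : Monotone (EnumBy f) :=
  fun _ _ hst _ ⟨k, hk, hfk⟩ => ⟨k, hk.trans_le hst, hfk⟩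

theorem computable₂_decide_mem_enumBy {f : ℕ → ℕ} (hf : Computable f) :
    Computable₂ fun m t => decide (m ∈ EnumBy f t) :=
  ComputablePred.decide (p := fun p : ℕ × ℕ => p.1 ∈ EnumBy f p.2)
    (ComputablePred.exists_lt_nat (p := fun m k => f k = m + 1)
      (Computable.computablePred (Primrec.eq.decide.to_comp.comp (hf.comp Computable.snd)
        (Primrec.succ.to_comp.comp Computable.fst))))

namespace IsEnum

variable {f : ℕ → ℕ} {A : Set ℕ}

theorem enumBy_subset (hf : IsEnum f A) (t : ℕ) : EnumBy f t ⊆ A :=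
  fun m ⟨k, _, hfk⟩ => (hf m).2 ⟨k, hfk⟩

theorem exists_enumBy_superset (hf : IsEnum f A) (n : ℕ) :
    ∃ t, ∀ m < n, m ∈ A → m ∈ EnumBy f t := by
  have hev : ∀ m ∈ Finset.range n, ∀ᶠ t in atTop, m ∈ A → m ∈ EnumBy f t := by
    intro m _
    by_cases hm : m ∈ A
    · obtain ⟨k, hk⟩ := (hf m).1 hm
      exact (eventually_gt_atTop k).mono fun t hkt _ => ⟨k, hkt, hk⟩
    · exact Eventually.of_forall fun _ h => absurd h hm
  obtain ⟨t, ht⟩ := ((Finset.eventually_all _).2 hev).exists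
  exact ⟨t, fun m hm => ht m (Finset.mem_range.2 hm)⟩

end IsEnum

def bitWeight (m : ℕ) : ℝ := 2⁻¹ ^ (m + 1)

theorem bitWeight_nonneg (m : ℕ) : 0 ≤ bitWeight m := by unfold bitWeight; positivity

theorem summable_bitWeight : Summable bitWeight :=
  (summable_nat_add_iff 1).2 (summable_geometric_of_lt_one (by norm_num) (by norm_num))

theorem realOfSet_eq_tsum_indicator (A : Set ℕ) :
    realOfSet A = ∑' m, A.indicator bitWeight m :=
  tsum_subtype A bitWeight

theorem sum_le_realOfSet {A : Set ℕ} {F : Finset ℕ} (hF : (F : Set ℕ) ⊆ A) :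
    ∑ m ∈ F, bitWeight m ≤ realOfSet A := by
  rw [realOfSet_eq_tsum_indicator]
  calc ∑ m ∈ F, bitWeight m = ∑ m ∈ F, A.indicator bitWeight m :=
        Finset.sum_congr rfl fun m hm => (Set.indicator_of_mem (hF hm) _).symm
    _ ≤ _ := (summable_bitWeight.indicator A).sum_le_tsum F
        fun m _ => Set.indicator_nonneg (fun m _ => bitWeight_nonneg m) m

theorem sum_indicator_add_le_realOfSet {A B : Set ℕ} (hBA : B ⊆ A) {m : ℕ} (hmA : m ∈ A)
    (hmB : m ∉ B) (n : ℕ) :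
    ∑ i ∈ Finset.range n, B.indicator bitWeight i + bitWeight m ≤ realOfSet A := by
  classical
  have hm : m ∉ (Finset.range n).filter (· ∈ B) := fun h => hmB (Finset.mem_filter.1 h).2
  simp only [Set.indicator_apply, ← Finset.sum_filter]
  rw [add_comm, ← Finset.sum_insert hm]
  refine sum_le_realOfSet fun i hi => ?_
  rcases Finset.mem_insert.1 hi with rfl | hi
  · exact hmA
  · exact hBA (Finset.mem_filter.1 hi).2

theorem realOfSet_le_sum_indicator_add (A : Set ℕ) (n : ℕ) :
    realOfSet A ≤ ∑ i ∈ Finset.range n, A.indicator bitWeight i + 2⁻¹ ^ n := by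
  have hA := summable_bitWeight.indicator A
  rw [realOfSet_eq_tsum_indicator, ← hA.sum_add_tsum_nat_add n]
  gcongr
  calc ∑' i, A.indicator bitWeight (i + n) ≤ ∑' i, bitWeight (i + n) :=
        (hA.comp_injective (add_left_injective n)).tsum_le_tsum
          (fun i => Set.indicator_le_self' (fun m _ => bitWeight_nonneg m) _)
          (summable_bitWeight.comp_injective (add_left_injective n))
    _ = 2⁻¹ ^ n := by
        simp only [bitWeight, pow_add, pow_succ]
        rw [tsum_mul_right, tsum_mul_right, tsum_geometric_inv_two]
        ring

/-- The binary digits of `enumBits f t n`, most significant first, record which of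
`0, …, n - 1` lie in `EnumBy f t`. -/
def enumBits (f : ℕ → ℕ) (t : ℕ) : ℕ → ℕ
  | 0 => 0
  | n + 1 => 2 * enumBits f t n + if n ∈ EnumBy f t then 1 else 0

theorem enumBits_div_two_pow (f : ℕ → ℕ) (t n : ℕ) :
    (enumBits f t n : ℝ) / 2 ^ n = ∑ m ∈ Finset.range n, (EnumBy f t).indicator bitWeight m := by
  induction n with
  | zero => simp [enumBits]
  | succ n ih =>
    rw [Finset.sum_range_succ, ← ih]
    by_cases h : n ∈ EnumBy f t <;> simp [enumBits, h, bitWeight, pow_succ] <;> ring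

theorem computable₂_enumBits {f : ℕ → ℕ} (hf : Computable f) : Computable₂ (enumBits f) := by
  have hbit : Computable fun q : (ℕ × ℕ) × ℕ × ℕ => cond (decide (q.2.1 ∈ EnumBy f q.1.1)) 1 0 :=
    Computable.cond ((computable₂_decide_mem_enumBy hf).comp (Computable.fst.comp Computable.snd)
      (Computable.fst.comp Computable.fst)) (Computable.const 1) (Computable.const 0)
  have hstep : Computable₂ fun (p : ℕ × ℕ) (ma : ℕ × ℕ) =>
      2 * ma.2 + cond (decide (ma.1 ∈ EnumBy f p.1)) 1 0 :=
    Primrec.nat_add.to_comp.comp (Primrec.nat_double.to_comp.comp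
      (Computable.snd.comp Computable.snd)) hbit
  have hrec : Computable fun p : ℕ × ℕ => Nat.rec (motive := fun _ => ℕ) 0
      (fun m acc => 2 * acc + cond (decide (m ∈ EnumBy f p.1)) 1 0) p.2 :=
    Computable.nat_rec Computable.snd (Computable.const 0) hstep
  refine hrec.of_eq fun p => ?_
  induction p.2 with
  | zero => rfl
  | succ n ih => simp only [enumBits, ← ih, Bool.cond_decide]

/-- Only elements below `n` are counted, which keeps the condition decidable. -/
def CatchesUp (a : ℕ → ℚ) (f : ℕ → ℕ) (n t : ℕ) : Prop :=
  (a n : ℝ) ≤ ∑ m ∈ Finset.range n, (EnumBy f t).indicator bitWeight m + 2⁻¹ ^ n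

theorem catchesUp_iff (a : ℕ → ℚ) (f : ℕ → ℕ) (n t : ℕ) :
    CatchesUp a f n t ↔ (a n).num.toNat * 2 ^ n ≤ (enumBits f t n + 1) * (a n).den := by
  rw [CatchesUp, ← enumBits_div_two_pow, ← Rat.le_natCast_div_iff (by positivity),
    ← Rat.cast_le (K := ℝ)]
  push_cast
  rw [add_div, inv_pow, one_div]

theorem computablePred_catchesUp {a : ℕ → ℚ} {f : ℕ → ℕ} (ha : Computable a)
    (hf : Computable f) : ComputablePred fun p : ℕ × ℕ => CatchesUp a f p.1 p.2 := by
  have hpow : Computable fun n : ℕ => 2 ^ n :=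
    (Primrec₂.unpaired'.1 Nat.Primrec.pow).to_comp.comp (Computable.const 2) Computable.id
  refine (Computable.computablePred (Primrec.nat_le.decide.to_comp.comp
    (Primrec.nat_mul.to_comp.comp (Rat.computable_num_toNat.comp (ha.comp Computable.fst))
      (hpow.comp Computable.fst))
    (Primrec.nat_mul.to_comp.comp (Primrec.succ.to_comp.comp
      ((computable₂_enumBits hf).comp Computable.snd Computable.fst))
      (Rat.computable_den_s9.comp (ha.comp Computable.fst))))).of_eq fun p => ?_
  exact (catchesUp_iff a f p.1 p.2).symm

theorem exists_catchesUp {a : ℕ → ℚ} {f : ℕ → ℕ} {A : Set ℕ}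
    (ha : ∀ n, (a n : ℝ) ≤ realOfSet A) (hf : IsEnum f A) (n : ℕ) : ∃ t, CatchesUp a f n t := by
  obtain ⟨t, ht⟩ := hf.exists_enumBy_superset n
  refine ⟨t, (ha n).trans ((realOfSet_le_sum_indicator_add A n).trans ?_)⟩
  apply add_le_add_left
  refine Finset.sum_le_sum fun m hm => ?_
  by_cases hmA : m ∈ A
  · rw [Set.indicator_of_mem hmA, Set.indicator_of_mem (ht m (Finset.mem_range.1 hm) hmA)]
  · rw [Set.indicator_of_notMem hmA]
    exact Set.indicator_nonneg (fun i _ => bitWeight_nonneg i) m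

theorem CatchesUp.of_succ {a : ℕ → ℚ} {f : ℕ → ℕ} {n t : ℕ} (ha : Monotone a)
    (h : CatchesUp a f (n + 1) t) : CatchesUp a f n t := by
  have hn : (EnumBy f t).indicator bitWeight n ≤ 2⁻¹ ^ (n + 1) :=
    Set.indicator_le_self' (fun i _ => bitWeight_nonneg i) n
  have han : (a n : ℝ) ≤ a (n + 1) := Rat.cast_le.2 (ha n.le_succ)
  unfold CatchesUp at h ⊢
  rw [Finset.sum_range_succ, pow_succ] at h
  rw [pow_succ] at hn
  linarith

theorem CatchesUp.mem_enumBy {a : ℕ → ℚ} {f : ℕ → ℕ} {A : Set ℕ} {n t : ℕ}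
    (hf : IsEnum f A) (h : CatchesUp a f n t) (hn : realOfSet A - a n < 2⁻¹ ^ n) {m : ℕ}
    (hmn : m + 1 < n) (hmA : m ∈ A) : m ∈ EnumBy f t := by
  by_contra hmE
  have hsum := sum_indicator_add_le_realOfSet (hf.enumBy_subset t) hmA hmE n
  have hpow : (2⁻¹ : ℝ) ^ n ≤ 2⁻¹ ^ (m + 2) := pow_le_pow_of_le_one (by norm_num) (by norm_num) hmn
  have hm : bitWeight m = 2 * 2⁻¹ ^ (m + 2) := by unfold bitWeight; ring
  unfold CatchesUp at h
  linarith

theorem stmt_9_general (A : Set ℕ)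
    (h : RegainApprox (realOfSet A)) :
    ∀ f : ℕ → ℕ, Computable f → IsEnum f A →
      ∃ r : ℕ → ℕ, Computable r ∧ StrictMono r ∧ RGood r f A := by
  classical
  obtain ⟨a, ha_comp, ha_mono, ha_lim, ha_freq⟩ := h
  intro f hf hA
  have hex := exists_catchesUp ((Rat.cast_mono.comp ha_mono).ge_of_tendsto ha_lim) hA
  set T := fun n => Nat.find (hex n)
  have hT : Monotone T :=
    monotone_nat_of_le_succ fun n => Nat.find_mono fun _ => CatchesUp.of_succ ha_mono
  refine ⟨fun n => T (n + 1) + n, ?_, ?_, ?_⟩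
  · exact Primrec.nat_add.to_comp.comp ((Computable.find (computablePred_catchesUp ha_comp hf)
      hex).comp Computable.succ) Computable.id
  · exact strictMono_nat_of_lt_succ fun n =>
      Nat.add_lt_add_of_le_of_lt (hT (Nat.le_succ (n + 1))) n.lt_succ_self
  · rw [← map_add_atTop_eq_nat 1, frequently_map] at ha_freq
    exact ha_freq.mono fun n hn m hm hmA => enumBy_mono f (Nat.le_add_right _ n)
      ((Nat.find_spec (hex (n + 1))).mem_enumBy hA hn (by omega) hmA)

/-- If `2^{-A}` is regainingly approximable then every computable enumeration of `A`
is `r`-good for some computable increasing `r`. -/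
theorem stmt_9 (A : Set ℕ) (hA : REPred (· ∈ A))
    (h : RegainApprox (realOfSet A)) :
    ∀ f : ℕ → ℕ, Computable f → IsEnum f A →
      ∃ r : ℕ → ℕ, Computable r ∧ StrictMono r ∧ RGood r f A :=
  stmt_9_general A h
end
end

section
/- For a computably enumerable set A ⊆ ℕ: if there exists a computable, nondecreasing, unbounded function r and a computable r-good enumeration of A, then there exists a computable id-good enumeration of A (i.e., one that is r-good for r = identity). -/
open Filter

noncomputable section

/-! Call `m` certified at level `N` when `m < N` and `f` enumerates `m` before stage `r N`.
As `r` is monotone and unbounded, the set of levels at which `m` is certified is upward closed,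
and nonempty exactly when `m ∈ A`. List `A` by increasing (least level, value): the codes
`Nat.pair m N` with `m < N`, ordered as natural numbers, are ordered lexicographically in `(N, m)`,
so it suffices to enumerate the decidable set of codes of (value, least level) in increasing order.
If `n` witnesses `r`-goodness, every element of `A` below `n` has least level at most `n`, and every
number of least level at most `n` lies in `A` below `n`. So `A ∩ [0, n)` is an initial segment of
the listing, of length at most `n`, and is listed before stage `n`. -/

theorem Computable.nat_count {α : Type*} [Primcodable α] {p : α → ℕ → Prop}
    [∀ a, DecidablePred (p a)] (hp : Computable₂ fun a n => decide (p a n)) :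
    Computable₂ fun a n => Nat.count (p a) n := by
  have hstep : Computable₂ fun (x : α × ℕ) (s : ℕ × ℕ) =>
      bif decide (p x.1 s.1) then s.2 + 1 else s.2 :=
    (cond (hp.comp (fst.comp fst) (fst.comp snd)) (succ.comp (snd.comp snd))
      (snd.comp snd)).to₂
  refine (nat_rec snd (const 0) hstep).of_eq fun ⟨a, n⟩ => ?_
  induction n with
  | zero => simp
  | succ n ih => by_cases h : p a n <;> simp_all [Nat.count_succ]

theorem Computable.nat_nth {p : ℕ → Prop} [DecidablePred p]
    (hp : Computable fun n => decide (p n)) : Computable (Nat.nth p) := by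
  rcases (Set.ofPred p).finite_or_infinite with hfin | hinf
  · exact ((Primrec.list_getD 0).comp (Primrec.const _) Primrec.id).to_comp.of_eq
      fun n => (Nat.nth_eq_getD_sort hfin n).symm
  · -- `nth p t` is the least `k` with `t < count p (k + 1)`
    have hcount : Computable₂ fun t k => decide (t < Nat.count p (k + 1)) :=
      Primrec.nat_lt.decide.to_comp.comp₂ fst.to₂
        ((nat_count (p := fun (_ : Unit) => p) (hp.comp snd).to₂).comp₂
          (const ()).to₂ (succ.comp snd).to₂)
    refine (Partrec.rfind hcount.partrec₂).of_eq_tot fun t =>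
      Nat.mem_rfind.2 ⟨?_, fun hk => ?_⟩
    · simp [Nat.lt_nth_iff_count_lt hinf]
    · simpa [Nat.lt_nth_iff_count_lt hinf] using hk

theorem Nat.pair_lt_succ_sq_iff {m N n : ℕ} (h : m < N) :
    Nat.pair m N < (n + 1) ^ 2 ↔ N ≤ n := by
  have hmax : max m N = N := max_eq_right h.le
  constructor
  · intro hlt
    have hsq : N ^ 2 < (n + 1) ^ 2 := by
      have := (Nat.max_sq_add_min_le_pair m N).trans_lt hlt
      rw [hmax] at this
      omega
    exact Nat.lt_succ_iff.1 (lt_of_pow_lt_pow_left₀ 2 (Nat.zero_le _) hsq)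
  · intro hle
    calc Nat.pair m N < (max m N + 1) ^ 2 := Nat.pair_lt_max_add_one_sq m N
      _ ≤ (n + 1) ^ 2 := by rw [hmax]; gcongr

namespace LevelEnum

open scoped Classical

variable {f r : ℕ → ℕ} {A : Set ℕ} {m n N N' : ℕ}

def Certified (f r : ℕ → ℕ) (N m : ℕ) : Prop := m < N ∧ m ∈ EnumBy f (r N)

/-- For monotone `r` this says that `N` is the least level of `m`; nothing is certified at
level `0`, so the truncation in `N - 1` is harmless. -/
def FirstCertified (f r : ℕ → ℕ) (N m : ℕ) : Prop :=
  Certified f r N m ∧ ¬Certified f r (N - 1) m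

def IsKey (f r : ℕ → ℕ) (k : ℕ) : Prop := FirstCertified f r k.unpair.2 k.unpair.1

/-- The guard fails only past the end of a finite key set, where `Nat.nth` returns `0`. -/
def levelEnum (f r : ℕ → ℕ) (t : ℕ) : ℕ :=
  if IsKey f r (Nat.nth (IsKey f r) t) then (Nat.nth (IsKey f r) t).unpair.1 + 1 else 0

theorem Certified.mono (hr : Monotone r) (hNN' : N ≤ N') (h : Certified f r N m) :
    Certified f r N' m := by
  obtain ⟨hmN, k, hk, hfk⟩ := h
  exact ⟨hmN.trans_le hNN', k, hk.trans_le (hr hNN'), hfk⟩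

theorem Certified.mem (hf : IsEnum f A) (h : Certified f r N m) : m ∈ A :=
  let ⟨_, k, _, hfk⟩ := h
  (hf m).2 ⟨k, hfk⟩

theorem FirstCertified.le (hr : Monotone r) (h : FirstCertified f r N m)
    (h' : Certified f r N' m) : N ≤ N' := by
  by_contra! hlt
  exact h.2 (h'.mono hr (by omega))

theorem FirstCertified.unique (hr : Monotone r) (h : FirstCertified f r N m)
    (h' : FirstCertified f r N' m) : N = N' :=
  le_antisymm (h.le hr h'.1) (h'.le hr h.1)

theorem exists_firstCertified_le (h : Certified f r N m) :
    ∃ N' ≤ N, FirstCertified f r N' m := by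
  have hex : ∃ N, Certified f r N m := ⟨N, h⟩
  refine ⟨Nat.find hex, Nat.find_min' hex h, Nat.find_spec hex, fun h' => ?_⟩
  have hpos : 0 < Nat.find hex := (Nat.find_spec hex).1.trans_le' (Nat.zero_le m)
  exact Nat.find_min hex (by omega) h'

theorem exists_firstCertified (hf : IsEnum f A) (hr : Monotone r) (hru : ∀ c, ∃ n, c < r n)
    (hm : m ∈ A) : ∃ N, FirstCertified f r N m := by
  obtain ⟨k, hk⟩ := (hf m).1 hm
  obtain ⟨n, hn⟩ := hru k
  have hcert : Certified f r (max n (m + 1)) m :=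
    ⟨by omega, k, hn.trans_le (hr (le_max_left _ _)), hk⟩
  obtain ⟨N, -, hN⟩ := exists_firstCertified_le hcert
  exact ⟨N, hN⟩

theorem isKey_pair : IsKey f r (Nat.pair m N) ↔ FirstCertified f r N m := by
  simp [IsKey]

theorem IsKey.eq_of_unpair_fst_eq (hr : Monotone r) {k k' : ℕ} (hk : IsKey f r k)
    (hk' : IsKey f r k') (h : k.unpair.1 = k'.unpair.1) : k = k' := by
  have h₂ : k.unpair.2 = k'.unpair.2 := hk.unique hr (h ▸ hk')
  rw [← Nat.pair_unpair k, ← Nat.pair_unpair k', h, h₂]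

theorem levelEnum_count {k : ℕ} (hk : IsKey f r k) :
    levelEnum f r (Nat.count (IsKey f r) k) = k.unpair.1 + 1 := by
  simp [levelEnum, Nat.nth_count hk, hk]

theorem count_isKey_le (hr : Monotone r) (n : ℕ) :
    Nat.count (IsKey f r) ((n + 1) ^ 2) ≤ n := by
  rw [Nat.count_eq_card_filter_range]
  calc _ ≤ (Finset.range n).card := by
        refine Finset.card_le_card_of_injOn (fun k => k.unpair.1) (fun k hk => ?_) ?_
        · simp only [Finset.coe_filter, Finset.mem_range, Set.mem_ofPred_eq] at hk
          obtain ⟨hkb, hk⟩ := hk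
          rw [← Nat.pair_unpair k, Nat.pair_lt_succ_sq_iff hk.1.1] at hkb
          simp only [Finset.coe_range, Set.mem_Iio]
          exact hk.1.1.trans_le hkb
        · intro k hk k' hk' hkk'
          simp only [Finset.coe_filter, Finset.mem_range, Set.mem_ofPred_eq] at hk hk'
          exact hk.2.eq_of_unpair_fst_eq hr hk'.2 hkk'
    _ = n := Finset.card_range n

theorem isEnum_levelEnum (hf : IsEnum f A) (hr : Monotone r) (hru : ∀ c, ∃ n, c < r n) :
    IsEnum (levelEnum f r) A := by
  intro m
  constructor
  · intro hm
    obtain ⟨N, hN⟩ := exists_firstCertified hf hr hru hm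
    exact ⟨_, by rw [levelEnum_count (isKey_pair.2 hN), Nat.unpair_pair]⟩
  · rintro ⟨t, ht⟩
    unfold levelEnum at ht
    split_ifs at ht with hk
    exact Nat.add_right_cancel ht ▸ hk.1.mem hf

theorem mem_enumBy_levelEnum (hr : Monotone r) (hn : ∀ m < n, m ∈ A → m ∈ EnumBy f (r n))
    (hm : m < n) (hmA : m ∈ A) : m ∈ EnumBy (levelEnum f r) n := by
  obtain ⟨N, hNn, hN⟩ := exists_firstCertified_le (f := f) (r := r) ⟨hm, hn m hm hmA⟩
  have hk : IsKey f r (Nat.pair m N) := isKey_pair.2 hN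
  have hkb : Nat.pair m N < (n + 1) ^ 2 := (Nat.pair_lt_succ_sq_iff hN.1.1).2 hNn
  refine ⟨_, (Nat.count_strict_mono hk hkb).trans_le (count_isKey_le hr n), ?_⟩
  rw [levelEnum_count hk, Nat.unpair_pair]

theorem mem_enumBy_iff_count_pos {t : ℕ} :
    m ∈ EnumBy f t ↔ 0 < Nat.count (fun k => f k = m + 1) t := by
  simp [EnumBy, Nat.pos_iff_ne_zero, Nat.count_iff_forall_not]

theorem computable_certified (hf : Computable f) (hr : Computable r) :
    Computable₂ fun N m => decide (Certified f r N m) := by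
  have hcount : Computable₂ fun m t => Nat.count (fun k => f k = m + 1) t :=
    Computable.nat_count (Primrec.eq.decide.to_comp.comp₂ (hf.comp Computable.snd).to₂
      (Computable.succ.comp Computable.fst).to₂)
  refine (Primrec.and.to_comp.comp₂
    (Primrec.nat_lt.decide.to_comp.comp₂ Computable.snd.to₂ Computable.fst.to₂)
    (Primrec.nat_lt.decide.to_comp.comp₂ (Computable.const 0).to₂
      (hcount.comp₂ Computable.snd.to₂ (hr.comp Computable.fst).to₂))).of_eq fun ⟨N, m⟩ => ?_
  simp [Certified, mem_enumBy_iff_count_pos]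

theorem computable_isKey (hf : Computable f) (hr : Computable r) :
    Computable fun k => decide (IsKey f r k) := by
  have hc := computable_certified hf hr
  have hN : Computable fun k : ℕ => k.unpair.2 := Computable.snd.comp Computable.unpair
  have hm : Computable fun k : ℕ => k.unpair.1 := Computable.fst.comp Computable.unpair
  refine (Primrec.and.to_comp.comp (hc.comp hN hm)
    (Primrec.not.to_comp.comp (hc.comp (Primrec.pred.to_comp.comp hN) hm))).of_eq fun k => ?_
  rw [← decide_not, ← Bool.decide_and]
  exact decide_eq_decide.2 Iff.rfl

theorem computable_levelEnum (hf : Computable f) (hr : Computable r) :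
    Computable (levelEnum f r) := by
  have hkey := computable_isKey hf hr
  have hnth := Computable.nat_nth hkey
  refine (Computable.cond (hkey.comp hnth)
    (Computable.succ.comp (Computable.fst.comp (Computable.unpair.comp hnth)))
    (Computable.const 0)).of_eq fun t => ?_
  simp [levelEnum]

end LevelEnum

open LevelEnum in
theorem stmt_10_general (A : Set ℕ)
    (h : ∃ f r : ℕ → ℕ, Computable f ∧ IsEnum f A ∧
      Computable r ∧ Monotone r ∧ (∀ c : ℕ, ∃ n, c < r n) ∧ RGood r f A) :
    ∃ g : ℕ → ℕ, Computable g ∧ IsEnum g A ∧ RGood id g A := by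
  obtain ⟨f, r, hf, hfA, hr, hrm, hru, hgood⟩ := h
  exact ⟨levelEnum f r, computable_levelEnum hf hr, isEnum_levelEnum hfA hrm hru,
    hgood.mono fun n hn m hm hmA => mem_enumBy_levelEnum hrm hn hm hmA⟩

/-- If `A` has some computable `r`-good enumeration for a computable nondecreasing
unbounded `r`, then `A` has a computable `id`-good enumeration. -/
theorem stmt_10 (A : Set ℕ) (hA : REPred (· ∈ A))
    (h : ∃ f r : ℕ → ℕ, Computable f ∧ IsEnum f A ∧
      Computable r ∧ Monotone r ∧ (∀ c : ℕ, ∃ n, c < r n) ∧ RGood r f A) :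
    ∃ g : ℕ → ℕ, Computable g ∧ IsEnum g A ∧ RGood id g A :=
  stmt_10_general A h
end
end

section
/- There is no continuous function F : ℕ^ℕ → ℕ^ℕ mapping every (2·id)-good enumeration without repetitions of an arbitrary set A ⊆ ℕ to an id-good enumeration of A. -/
/-- An enumeration without repetitions. -/
def EnumNoRep (f : ℕ → ℕ) (A : Set ℕ) : Prop :=
  IsEnum f A ∧ ∀ n ∈ A, ∃! k, f k = n + 1

/-- There is no continuous `F : ℕ^ℕ → ℕ^ℕ` (Baire space) mapping every `2·id`-good
enumeration without repetitions of an arbitrary `A ⊆ ℕ` to an `id`-good enumeration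
of `A`. -/
theorem stmt_11 :
    ¬ ∃ F : (ℕ → ℕ) → (ℕ → ℕ), Continuous F ∧
      ∀ (A : Set ℕ) (f : ℕ → ℕ), EnumNoRep f A → RGood (fun n => 2 * n) f A →
        IsEnum (F f) A ∧ RGood id (F f) A := by
  rintro ⟨F, hF, hmain⟩
  -- The all-zero function enumerates ∅, so `F z 0 = 0`.
  set z : ℕ → ℕ := fun _ => 0 with hzdef
  have hz0 : F z 0 = 0 := by
    have h1 : EnumNoRep z ∅ := by
      constructor
      · intro n
        constructor
        · intro hn; exact absurd hn (Set.notMem_empty n)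
        · rintro ⟨k, hk⟩; simp [hzdef] at hk
      · intro n hn; exact absurd hn (Set.notMem_empty n)
    have h2 : RGood (fun n => 2 * n) z ∅ := by
      apply Filter.Frequently.of_forall
      intro n m hm hmem; exact absurd hmem (Set.notMem_empty m)
    have hIs := (hmain ∅ z h1 h2).1
    rcases hk : F z 0 with _ | m
    · rfl
    · exact absurd ((hIs m).mpr ⟨0, hk⟩) (Set.notMem_empty m)
  -- Continuity modulus at `z` for the value at index 0.
  obtain ⟨l, hl⟩ : ∃ l, ∀ h : ℕ → ℕ, (∀ i < l, h i = 0) → F h 0 = 0 := by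
    have hc : Continuous fun h : ℕ → ℕ => F h 0 := (continuous_apply 0).comp hF
    have hopen : IsOpen {h : ℕ → ℕ | F h 0 = 0} :=
      hc.isOpen_preimage {0} (isOpen_discrete _)
    rw [isOpen_pi_iff] at hopen
    obtain ⟨I, u, hIu, hsub⟩ := hopen z hz0
    refine ⟨(I.sup id) + 1, fun h hh => hsub ?_⟩
    intro i hi
    have hhi : h i = 0 := hh i (Nat.lt_succ_of_le (Finset.le_sup (f := id) hi))
    have := (hIu i hi).2
    simpa [hhi, hzdef] using this
  -- The delayed increasing enumeration of ℕ.
  set f : ℕ → ℕ := fun i => if i < l then 0 else i - l + 1 with hfdef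
  have hfval : ∀ m : ℕ, f (l + m) = m + 1 := by
    intro m; simp only [hfdef]
    rw [if_neg (by omega)]; omega
  have hNoRep : EnumNoRep f Set.univ := by
    constructor
    · intro n
      constructor
      · intro _; exact ⟨l + n, hfval n⟩
      · intro _; trivial
    · intro n _
      refine ⟨l + n, hfval n, ?_⟩
      intro k hk
      simp only [hfdef] at hk
      by_cases h : k < l
      · rw [if_pos h] at hk; omega
      · rw [if_neg h] at hk; omega
  have hGood : RGood (fun n => 2 * n) f Set.univ := by
    rw [RGood, Filter.frequently_atTop]
    intro N
    refine ⟨max N l, le_max_left _ _, ?_⟩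
    intro m hm _
    exact ⟨l + m, by omega, hfval m⟩
  obtain ⟨hEnum, hRG⟩ := hmain Set.univ f hNoRep hGood
  set g : ℕ → ℕ := F f with hgdef
  have hg0 : g 0 = 0 := hl f (fun i hi => by simp [hfdef, hi])
  -- Pigeonhole: for any n ≥ 1, the first n stages of g miss some m < n.
  rw [RGood, Filter.frequently_atTop] at hRG
  obtain ⟨n, hn1, H⟩ := hRG 1
  have hK : ∀ m : ℕ, ∃ k, m < n → ((0 < k ∧ k < n) ∧ g k = m + 1) := by
    intro m
    by_cases hm : m < n
    · obtain ⟨k, hk, hgk⟩ := H m hm trivial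
      refine ⟨k, fun _ => ⟨⟨?_, hk⟩, hgk⟩⟩
      rcases Nat.eq_zero_or_pos k with h0 | h0
      · rw [h0, hg0] at hgk; omega
      · exact h0
    · exact ⟨0, fun h => absurd h hm⟩
  choose K hKs using hK
  have hcard : (Finset.Ico 1 n).card < (Finset.range n).card := by
    rw [Nat.card_Ico, Finset.card_range]; omega
  have hmaps : ∀ m ∈ Finset.range n, K m ∈ Finset.Ico 1 n := by
    intro m hm
    have := hKs m (Finset.mem_range.mp hm)
    exact Finset.mem_Ico.mpr ⟨this.1.1, this.1.2⟩
  obtain ⟨m1, hm1, m2, hm2, hne, heq⟩ :=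
    Finset.exists_ne_map_eq_of_card_lt_of_maps_to hcard hmaps
  have h1 := (hKs m1 (Finset.mem_range.mp hm1)).2
  have h2 := (hKs m2 (Finset.mem_range.mp hm2)).2
  rw [heq, h2] at h1
  omega
end

section
/- For any computably enumerable sets X, Y ⊆ ℕ there exists d ∈ ℕ such that C((X ∪ Y)↾n) ≤ max{C(X↾n), C(Y↾n)} + d for all n ∈ ℕ. -/
/-!
Fix stagewise enumerations of `X` and `Y`. Given `X↾n`, one can wait for the first stage at which
the approximation of `X` agrees with it on `[0, n)`; if `X` settles there no earlier than `Y`, the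
approximation of `X ∪ Y` at that stage is already `(X ∪ Y)↾n`. So `(X ∪ Y)↾n` is computable from
`X↾n` or from `Y↾n`, together with one bit saying which of the two settles last.
-/

open Filter

noncomputable section

/-- A machine has prefix-free domain. -/
def PrefixFreeDom (U : List Bool →. List Bool) : Prop :=
  ∀ p q : List Bool, p <+: q → (U p).Dom → (U q).Dom → p = q

/-- The Kolmogorov complexity of `w` relative to the machine `U` (∞ if no program). -/
def mCplx (U : List Bool →. List Bool) (w : List Bool) : ℕ∞ :=
  sInf {c : ℕ∞ | ∃ p : List Bool, w ∈ U p ∧ (p.length : ℕ∞) = c}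

/-- `U` is an optimal (universal up to a constant) machine for plain complexity. -/
def OptimalPlain (U : List Bool →. List Bool) : Prop :=
  Partrec U ∧ ∀ V : List Bool →. List Bool, Partrec V →
    ∃ d : ℕ, ∀ w, mCplx U w ≤ mCplx V w + (d : ℕ∞)

/-- `U` is an optimal prefix-free machine. -/
def OptimalPrefix (U : List Bool →. List Bool) : Prop :=
  Partrec U ∧ PrefixFreeDom U ∧
    ∀ V : List Bool →. List Bool, Partrec V → PrefixFreeDom V →
      ∃ d : ℕ, ∀ w, mCplx U w ≤ mCplx V w + (d : ℕ∞)

open Classical in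
/-- The first `n` bits of the characteristic sequence of `A`. -/
def setSeg (A : Set ℕ) (n : ℕ) : List Bool := (List.range n).map fun i => decide (i ∈ A)

section Complexity

variable {U : List Bool →. List Bool} {w p : List Bool}

theorem mCplx_le_length (h : w ∈ U p) : mCplx U w ≤ p.length :=
  sInf_le ⟨p, h, rfl⟩

theorem exists_length_eq_mCplx (h : mCplx U w ≠ ⊤) :
    ∃ p, w ∈ U p ∧ (p.length : ℕ∞) = mCplx U w := by
  rcases Set.eq_empty_or_nonempty {c : ℕ∞ | ∃ p, w ∈ U p ∧ (p.length : ℕ∞) = c}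
    with hS | hS
  · exact absurd (by rw [mCplx, hS, sInf_empty]) h
  · exact csInf_mem hS

theorem OptimalPlain.exists_mCplx_le_of_mem {F : Bool → List Bool →. List Bool}
    (hU : OptimalPlain U) (hF : Partrec₂ F) :
    ∃ d : ℕ, ∀ b w v, v ∈ F b w → mCplx U v ≤ mCplx U w + d := by
  let V : List Bool →. List Bool := fun l =>
    (Part.ofOption l.head?).bind fun b => (U l.tail).bind (F b)
  have hV : Partrec V :=
    (Computable.ofOption Primrec.list_head?.to_comp).bind
      ((hU.1.comp (Primrec.list_tail.comp Primrec.fst).to_comp).bind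
        (hF.comp (Computable.snd.comp Computable.fst) Computable.snd))
  obtain ⟨d, hd⟩ := hU.2 V hV
  refine ⟨d + 1, fun b w v hv => ?_⟩
  by_cases hw : mCplx U w = ⊤
  · simp [hw]
  obtain ⟨p, hp, hlen⟩ := exists_length_eq_mCplx hw
  have hbp : v ∈ V (b :: p) := by
    simp only [V, List.head?_cons, List.tail_cons, Part.coe_some, Part.bind_some]
    exact Part.mem_bind_iff.2 ⟨w, hp, hv⟩
  calc mCplx U v ≤ mCplx V v + d := hd v
    _ ≤ (b :: p).length + d := by gcongr; exact mCplx_le_length hbp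
    _ = mCplx U w + (d + 1 : ℕ) := by rw [List.length_cons, ← hlen]; push_cast; ring

end Complexity

def IsEnumeration (X : Set ℕ) (f : ℕ → ℕ → Bool) : Prop :=
  (∀ i, Monotone fun s => f s i) ∧ ∀ i, i ∈ X ↔ ∃ s, f s i = true

open Nat.Partrec Code in
theorem REPred.exists_isEnumeration {X : Set ℕ} (hX : REPred (· ∈ X)) :
    ∃ f, Primrec₂ f ∧ IsEnumeration X f := by
  have hdom : Nat.Partrec fun i => (Part.assert (i ∈ X) fun _ => Part.some ()).map fun _ => 0 :=
    Partrec.nat_iff.1 (hX.map (Computable.const 0).to₂)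
  obtain ⟨c, hc⟩ := exists_code.1 hdom
  have hX : ∀ i, i ∈ X ↔ (eval c i).Dom := by simp [hc, Part.assert]
  refine ⟨fun s i => (evaln s c i).isSome,
    (Primrec.option_isSome.comp (primrec_evaln.comp
      ((Primrec.fst.pair (Primrec.const c)).pair Primrec.snd))).to₂, ?_, fun i => ?_⟩
  · intro i s t hst
    simp only [Bool.le_iff_imp, Option.isSome_iff_exists]
    exact fun ⟨x, hx⟩ => ⟨x, evaln_mono hst hx⟩
  · simp only [hX, Option.isSome_iff_exists, Part.dom_iff_mem]
    exact ⟨fun ⟨x, hx⟩ => (evaln_complete.1 hx).imp fun _ h => ⟨x, h⟩,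
      fun ⟨s, x, hx⟩ => ⟨x, evaln_complete.2 ⟨s, hx⟩⟩⟩

def approxSeg (f : ℕ → ℕ → Bool) (s n : ℕ) : List Bool := (List.range n).map (f s)

theorem Primrec₂.approxSeg {f : ℕ → ℕ → Bool} (hf : Primrec₂ f) : Primrec₂ (approxSeg f) :=
  (Primrec.list_map (Primrec.list_range.comp Primrec.snd)
    (hf.comp (Primrec.fst.comp Primrec.fst) Primrec.snd).to₂).to₂

theorem setSeg_length (A : Set ℕ) (n : ℕ) : (setSeg A n).length = n := by
  simp [setSeg]

theorem Nat.find_mem_rfind {p : ℕ → Prop} [DecidablePred p] (h : ∃ n, p n) :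
    Nat.find h ∈ Nat.rfind fun n => Part.some (decide (p n)) :=
  Nat.mem_rfind.2 ⟨by simpa using Nat.find_spec h, fun hm => by simpa using Nat.find_min h hm⟩

def unionDecoder (f g : ℕ → ℕ → Bool) (b : Bool) (w : List Bool) : Part (List Bool) :=
  (Nat.rfind fun s => Part.some (decide (approxSeg (cond b f g) s w.length = w))).map
    fun s => approxSeg (fun s i => f s i || g s i) s w.length

theorem partrec₂_unionDecoder {f g : ℕ → ℕ → Bool} (hf : Primrec₂ f) (hg : Primrec₂ g) :
    Partrec₂ (unionDecoder f g) := by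
  have hlen : Primrec fun q : (Bool × List Bool) × ℕ => q.1.2.length :=
    Primrec.list_length.comp (Primrec.snd.comp Primrec.fst)
  have hseg : Primrec fun q : (Bool × List Bool) × ℕ =>
      approxSeg (cond q.1.1 f g) q.2 q.1.2.length :=
    (Primrec.cond (Primrec.fst.comp Primrec.fst) (hf.approxSeg.comp Primrec.snd hlen)
      (hg.approxSeg.comp Primrec.snd hlen)).of_eq fun q => by cases q.1.1 <;> rfl
  have hunion : Primrec₂ fun s i => f s i || g s i := Primrec.or.comp₂ hf hg
  exact Partrec.map
    (Partrec.rfind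
      (Primrec.eq.comp hseg (Primrec.snd.comp Primrec.fst)).decide.to_comp.partrec.to₂)
    (hunion.approxSeg.comp Primrec.snd hlen).to_comp.to₂

namespace IsEnumeration

variable {X Y : Set ℕ} {f g : ℕ → ℕ → Bool}

theorem mem_of_eq_true (hf : IsEnumeration X f) {s i : ℕ} (h : f s i = true) : i ∈ X :=
  (hf.2 i).2 ⟨s, h⟩

theorem eq_true_of_le (hf : IsEnumeration X f) {s t i : ℕ} (hst : s ≤ t) (h : f s i = true) :
    f t i = true :=
  Bool.le_iff_imp.1 (hf.1 i hst) h

open Classical in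
theorem approxSeg_eq_setSeg_iff (hf : IsEnumeration X f) {s n : ℕ} :
    approxSeg f s n = setSeg X n ↔ ∀ i < n, i ∈ X → f s i = true := by
  simp only [approxSeg, setSeg, List.map_inj_left, List.mem_range]
  refine forall₂_congr fun i _ => ?_
  by_cases hi : i ∈ X
  · simp [hi]
  · simpa [hi] using fun h => hi (hf.mem_of_eq_true h)

theorem approxSeg_eq_setSeg_mono (hf : IsEnumeration X f) {s t n : ℕ} (hst : s ≤ t)
    (h : approxSeg f s n = setSeg X n) : approxSeg f t n = setSeg X n :=
  hf.approxSeg_eq_setSeg_iff.2 fun i hi hiX =>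
    hf.eq_true_of_le hst (hf.approxSeg_eq_setSeg_iff.1 h i hi hiX)

theorem exists_approxSeg_eq_setSeg (hf : IsEnumeration X f) (n : ℕ) :
    ∃ s, approxSeg f s n = setSeg X n := by
  induction n with
  | zero => exact ⟨0, rfl⟩
  | succ n ih =>
    obtain ⟨s, hs⟩ := ih
    obtain ⟨t, ht⟩ : ∃ t, n ∈ X → f t n = true := by
      by_cases hn : n ∈ X
      exacts [((hf.2 n).1 hn).imp fun _ h _ => h, ⟨0, fun h => absurd h hn⟩]
    refine ⟨max s t, hf.approxSeg_eq_setSeg_iff.2 fun i hi hiX => ?_⟩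
    rcases Nat.lt_succ_iff_lt_or_eq.1 hi with hi | rfl
    · exact hf.eq_true_of_le (le_max_left s t) (hf.approxSeg_eq_setSeg_iff.1 hs i hi hiX)
    · exact hf.eq_true_of_le (le_max_right s t) (ht hiX)

theorem union (hf : IsEnumeration X f) (hg : IsEnumeration Y g) :
    IsEnumeration (X ∪ Y) fun s i => f s i || g s i := by
  refine ⟨fun i s t hst => ?_, fun i => ?_⟩
  · simp only [Bool.le_iff_imp, Bool.or_eq_true]
    exact Or.imp (hf.eq_true_of_le hst) (hg.eq_true_of_le hst)
  · simp only [Set.mem_union, hf.2, hg.2, Bool.or_eq_true]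
    exact ⟨Or.rec (fun ⟨s, h⟩ => ⟨s, .inl h⟩) fun ⟨s, h⟩ => ⟨s, .inr h⟩,
      fun ⟨s, h⟩ => h.imp (⟨s, ·⟩) (⟨s, ·⟩)⟩

theorem approxSeg_union (hf : IsEnumeration X f) (hg : IsEnumeration Y g) {s n : ℕ}
    (hX : approxSeg f s n = setSeg X n) (hY : approxSeg g s n = setSeg Y n) :
    approxSeg (fun s i => f s i || g s i) s n = setSeg (X ∪ Y) n :=
  (hf.union hg).approxSeg_eq_setSeg_iff.2 fun i hi hXY => by
    rw [Bool.or_eq_true]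
    exact hXY.imp (hf.approxSeg_eq_setSeg_iff.1 hX i hi) (hg.approxSeg_eq_setSeg_iff.1 hY i hi)

theorem setSeg_union_mem_unionDecoder_of_settled {b : Bool} (hf : IsEnumeration X f)
    (hg : IsEnumeration Y g) {n : ℕ}
    (hsettle : ∀ s, approxSeg (cond b f g) s n = setSeg (cond b X Y) n →
      approxSeg f s n = setSeg X n ∧ approxSeg g s n = setSeg Y n) :
    setSeg (X ∪ Y) n ∈ unionDecoder f g b (setSeg (cond b X Y) n) := by
  have hex : ∃ s, approxSeg (cond b f g) s n = setSeg (cond b X Y) n := by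
    cases b
    exacts [hg.exists_approxSeg_eq_setSeg n, hf.exists_approxSeg_eq_setSeg n]
  obtain ⟨hX, hY⟩ := hsettle _ (Nat.find_spec hex)
  rw [unionDecoder, setSeg_length]
  exact (Part.mem_map_iff _).2 ⟨_, Nat.find_mem_rfind hex, hf.approxSeg_union hg hX hY⟩

theorem exists_setSeg_union_mem_unionDecoder (hf : IsEnumeration X f)
    (hg : IsEnumeration Y g) (n : ℕ) :
    ∃ b, setSeg (X ∪ Y) n ∈ unionDecoder f g b (setSeg (cond b X Y) n) := by
  classical
  have hX := hf.exists_approxSeg_eq_setSeg n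
  have hY := hg.exists_approxSeg_eq_setSeg n
  rcases le_total (Nat.find hX) (Nat.find hY) with hXY | hYX
  · exact ⟨false, hf.setSeg_union_mem_unionDecoder_of_settled hg fun u hu =>
      ⟨hf.approxSeg_eq_setSeg_mono (hXY.trans (Nat.find_min' hY hu)) (Nat.find_spec hX), hu⟩⟩
  · exact ⟨true, hf.setSeg_union_mem_unionDecoder_of_settled hg fun u hu =>
      ⟨hu, hg.approxSeg_eq_setSeg_mono (hYX.trans (Nat.find_min' hX hu)) (Nat.find_spec hY)⟩⟩

end IsEnumeration

/-- For c.e. sets `X, Y` the plain complexity of initial segments of `X ∪ Y` is bounded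
by the maximum of those of `X` and `Y`, up to a constant. -/
theorem stmt_17 (U : List Bool →. List Bool) (hU : OptimalPlain U)
    (X Y : Set ℕ) (hX : REPred (· ∈ X)) (hY : REPred (· ∈ Y)) :
    ∃ d : ℕ, ∀ n : ℕ,
      mCplx U (setSeg (X ∪ Y) n) ≤
        max (mCplx U (setSeg X n)) (mCplx U (setSeg Y n)) + (d : ℕ∞) := by
  obtain ⟨f, hf_prim, hf⟩ := hX.exists_isEnumeration
  obtain ⟨g, hg_prim, hg⟩ := hY.exists_isEnumeration
  obtain ⟨d, hd⟩ := hU.exists_mCplx_le_of_mem (partrec₂_unionDecoder hf_prim hg_prim)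
  refine ⟨d, fun n => ?_⟩
  obtain ⟨b, hb⟩ := hf.exists_setSeg_union_mem_unionDecoder hg n
  calc mCplx U (setSeg (X ∪ Y) n) ≤ mCplx U (setSeg (cond b X Y) n) + d := hd _ _ _ hb
    _ ≤ max (mCplx U (setSeg X n)) (mCplx U (setSeg Y n)) + d := by
      gcongr
      cases b
      exacts [le_max_right _ _, le_max_left _ _]
end
end
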